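/- arXiv:2009.08765 — 2 statements merged into one kernel-verified Lean document; each statement's English description precedes it below -/
import Mathlib

section
/- Let s2 > 0 and let θ, μ, a1, a2, h2 be reals. Define G2 : ℝ → ℝ by G2(P) = 4(1 − θ(1 + μP))/((a1² + a2²)(P² + P·s2) + 2s2 − 2a2·h2·P) − 2(1−θ)/(θP + s2) − (1−θ)²·P/(θP + s2)². Then G2(0) = 0, and G2 has derivative at P = 0 equal to ((1−θ)(2a2·h2 − (a1² + a2²)·s2) − (1−θ)(1−3θ) − 2θ·μ·s2)/s2². Consequently, this derivative is positive if and only if (1−θ)(2a2·h2 − (a1² + a2²)·s2) > (1−θ)(1−3θ) + 2θ·μ·s2. -/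
/-!
Each of the three terms of `G2` is a linear function of `P` divided by a quadratic one
with nonzero constant term, and `(a + b P) / (c + d P + e P²)` has derivative
`(b c - a d) / c²` at `P = 0`; summing the three contributions gives the formula.
-/

theorem hasDerivAt_linear_div_quadratic_zero (a b c d e : ℝ) (hc : c ≠ 0) :
    HasDerivAt (fun x : ℝ => (a + b * x) / (c + d * x + e * x ^ 2))
      ((b * c - a * d) / c ^ 2) 0 := by
  have hnum : HasDerivAt (fun x : ℝ => a + b * x) b 0 := by
    simpa using ((hasDerivAt_id' (0 : ℝ)).const_mul b).const_add a
  have hden : HasDerivAt (fun x : ℝ => c + d * x + e * x ^ 2) d 0 := by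
    simpa using (((hasDerivAt_id' (0 : ℝ)).const_mul d).const_add c).fun_add
      (((hasDerivAt_id' (0 : ℝ)).pow 2).const_mul e)
  exact (hnum.fun_div hden (by simpa using hc)).congr_deriv (by simp)

/-- Second derivative condition of the low-power achievability analysis:
`G2(0) = 0`, `G2'(0) = ((1−θ)(2a2h2 − (a1²+a2²)s2) − (1−θ)(1−3θ) − 2θμs2)/s2²`,
and this derivative is positive iff
`(1−θ)(2a2h2 − (a1²+a2²)s2) > (1−θ)(1−3θ) + 2θμs2`. -/
theorem stmt12 (s2 θ μ a1 a2 h2 : ℝ) (hs2 : 0 < s2) :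
    (fun P : ℝ => 4 * (1 - θ * (1 + μ * P)) /
        ((a1 ^ 2 + a2 ^ 2) * (P ^ 2 + P * s2) + 2 * s2 - 2 * a2 * h2 * P)
        - 2 * (1 - θ) / (θ * P + s2) - (1 - θ) ^ 2 * P / (θ * P + s2) ^ 2) 0 = 0 ∧
    HasDerivAt (fun P : ℝ => 4 * (1 - θ * (1 + μ * P)) /
        ((a1 ^ 2 + a2 ^ 2) * (P ^ 2 + P * s2) + 2 * s2 - 2 * a2 * h2 * P)
        - 2 * (1 - θ) / (θ * P + s2) - (1 - θ) ^ 2 * P / (θ * P + s2) ^ 2)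
      (((1 - θ) * (2 * a2 * h2 - (a1 ^ 2 + a2 ^ 2) * s2)
        - (1 - θ) * (1 - 3 * θ) - 2 * θ * μ * s2) / s2 ^ 2) 0 ∧
    (0 < ((1 - θ) * (2 * a2 * h2 - (a1 ^ 2 + a2 ^ 2) * s2)
        - (1 - θ) * (1 - 3 * θ) - 2 * θ * μ * s2) / s2 ^ 2 ↔
      (1 - θ) * (2 * a2 * h2 - (a1 ^ 2 + a2 ^ 2) * s2) >
        (1 - θ) * (1 - 3 * θ) + 2 * θ * μ * s2) := by
  have hs2_ne : s2 ≠ 0 := hs2.ne'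
  refine ⟨?_, ?_, ?_⟩
  · norm_num
    field_simp
    ring
  · set A := a1 ^ 2 + a2 ^ 2
    have term₁ := hasDerivAt_linear_div_quadratic_zero (4 * (1 - θ)) (-4 * θ * μ) (2 * s2)
      (A * s2 - 2 * a2 * h2) A (by positivity)
    have term₂ := hasDerivAt_linear_div_quadratic_zero (2 * (1 - θ)) 0 s2 θ 0 hs2_ne
    have term₃ := hasDerivAt_linear_div_quadratic_zero 0 ((1 - θ) ^ 2) (s2 ^ 2) (2 * θ * s2)
      (θ ^ 2) (by positivity)
    refine (((term₁.fun_sub term₂).fun_sub term₃).congr_deriv ?_).congr_of_eventuallyEq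
      (.of_forall fun P => ?_)
    · field_simp
      ring
    · ring
  · rw [div_pos_iff_of_pos_right (by positivity)]
    constructor <;> intro h <;> linarith
end

section
/- Let σ1², σ2², σfb1², σfb2² be positive reals, define g : (0,∞) → ℝ by g(x) = x·σfb1²/(σ1²(σ1² + σfb1²)) + σfb2²/(x·σ2²(σ2² + σfb2²)) − 2/σ2², and set x* = √(((1 + σ1²/σfb1²)/(1 + σ2²/σfb2²))·(σ1²/σ2²)). Then the following are equivalent: (i) g(x*) < 0; (ii) there exists x > 0 with g(x) < 0; (iii) σ2²/σ1² < (σ1²/σfb1² + 1)·(σ2²/σfb2² + 1). -/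
/-! On `x > 0` the function `a x + b / x` is minimized at `x = √(b/a)`, with minimum `2√(ab)`
by AM–GM. Here `g x = A x + B / x - 2 / σ₂²`, and the point `x*` is exactly `√(B/A)`; so `g` is
negative somewhere iff it is negative at `x*` iff `2√(AB) < 2/σ₂²`, and squaring turns the
last inequality into the threshold condition. -/

open Real

section MulAddDiv

variable {a b c x : ℝ}

theorem two_sqrt_mul_le_mul_add_div (ha : 0 ≤ a) (hb : 0 ≤ b) (hx : 0 < x) :
    2 * √(a * b) ≤ a * x + b / x := by
  have hsplit : √(a * b) = √(a * x) * √(b / x) := by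
    rw [← sqrt_mul (by positivity)]
    congr 1
    field_simp
  rw [hsplit]
  nlinarith [sq_nonneg (√(a * x) - √(b / x)), sq_sqrt (by positivity : 0 ≤ a * x),
    sq_sqrt (by positivity : 0 ≤ b / x)]

theorem mul_sqrt_div_add_div_sqrt_div (ha : 0 < a) (hb : 0 < b) :
    a * √(b / a) + b / √(b / a) = 2 * √(a * b) := by
  set t := √(b / a) with ht
  have htpos : 0 < t := sqrt_pos.mpr (by positivity)
  have hb_eq : b = a * t ^ 2 := by
    rw [ht, sq_sqrt (by positivity)]
    field_simp
  have hsqrt : √(a * b) = a * t := by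
    rw [hb_eq, show a * (a * t ^ 2) = (a * t) ^ 2 by ring, sqrt_sq (by positivity)]
  rw [hsqrt, hb_eq]
  field_simp
  ring

theorem exists_pos_mul_add_div_lt_iff (ha : 0 < a) (hb : 0 < b) :
    (∃ x, 0 < x ∧ a * x + b / x < c) ↔ 2 * √(a * b) < c := by
  constructor
  · rintro ⟨x, hx, hlt⟩
    exact (two_sqrt_mul_le_mul_add_div ha.le hb.le hx).trans_lt hlt
  · intro hlt
    refine ⟨√(b / a), sqrt_pos.mpr (by positivity), ?_⟩
    rwa [mul_sqrt_div_add_div_sqrt_div ha hb]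

theorem mul_add_div_lt_at_sqrt_div_iff (ha : 0 < a) (hb : 0 < b) :
    a * √(b / a) + b / √(b / a) < c ↔ ∃ x, 0 < x ∧ a * x + b / x < c := by
  rw [exists_pos_mul_add_div_lt_iff ha hb, mul_sqrt_div_add_div_sqrt_div ha hb]

end MulAddDiv

theorem two_sqrt_mul_lt_two_div_iff {s1 s2 sfb1 sfb2 : ℝ}
    (hs1 : 0 < s1) (hs2 : 0 < s2) (hsfb1 : 0 < sfb1) (hsfb2 : 0 < sfb2) :
    2 * √(sfb1 / (s1 * (s1 + sfb1)) * (sfb2 / (s2 * (s2 + sfb2)))) < 2 / s2 ↔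
      s2 / s1 < (s1 / sfb1 + 1) * (s2 / sfb2 + 1) := by
  have hpoly : s2 / s1 < (s1 / sfb1 + 1) * (s2 / sfb2 + 1) ↔
      s2 * (sfb1 * sfb2) < s1 * (s1 + sfb1) * (s2 + sfb2) := by
    rw [div_add_one hsfb1.ne', div_add_one hsfb2.ne', div_mul_div_comm,
      div_lt_div_iff₀ hs1 (by positivity)]
    constructor <;> intro h <;> linarith
  rw [hpoly, show 2 / s2 = 2 * (1 / s2) by ring, mul_lt_mul_iff_right₀ two_pos,
    sqrt_lt' (by positivity), div_mul_div_comm, div_pow, one_pow,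
    div_lt_div_iff₀ (by positivity) (by positivity)]
  constructor <;> intro h <;> nlinarith

/-- Final step of the achievability proof of Theorem 1: with
`g(x) = x·σfb1²/(σ1²(σ1²+σfb1²)) + σfb2²/(x·σ2²(σ2²+σfb2²)) − 2/σ2²` and
`x* = √(((1+σ1²/σfb1²)/(1+σ2²/σfb2²))·(σ1²/σ2²))`, the following are equivalent:
(i) `g(x*) < 0`; (ii) `∃ x > 0, g(x) < 0`;
(iii) `σ2²/σ1² < (σ1²/σfb1² + 1)(σ2²/σfb2² + 1)`. -/
theorem stmt17 (s1 s2 sfb1 sfb2 : ℝ)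
    (hs1 : 0 < s1) (hs2 : 0 < s2) (hsfb1 : 0 < sfb1) (hsfb2 : 0 < sfb2)
    (g : ℝ → ℝ)
    (hg : g = fun x : ℝ =>
      x * sfb1 / (s1 * (s1 + sfb1)) + sfb2 / (x * s2 * (s2 + sfb2)) - 2 / s2)
    (xstar : ℝ)
    (hxstar : xstar = Real.sqrt ((1 + s1 / sfb1) / (1 + s2 / sfb2) * (s1 / s2))) :
    (g xstar < 0 ↔ ∃ x : ℝ, 0 < x ∧ g x < 0) ∧
    ((∃ x : ℝ, 0 < x ∧ g x < 0) ↔ s2 / s1 < (s1 / sfb1 + 1) * (s2 / sfb2 + 1)) := by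
  set A := sfb1 / (s1 * (s1 + sfb1))
  set B := sfb2 / (s2 * (s2 + sfb2))
  have hA : 0 < A := by positivity
  have hB : 0 < B := by positivity
  have hg_neg : ∀ x, g x < 0 ↔ A * x + B / x < 2 / s2 := by
    intro x
    rw [hg, sub_neg, show sfb2 / (x * s2 * (s2 + sfb2)) = B / x by
      rw [div_div, mul_assoc, mul_comm x], mul_div_assoc, mul_comm x]
  have hxstar_eq : xstar = √(B / A) := by
    rw [hxstar]
    congr 1
    simp only [A, B]
    field_simp
    ring
  simp only [hg_neg, hxstar_eq]
  exact ⟨mul_add_div_lt_at_sqrt_div_iff hA hB,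
    (exists_pos_mul_add_div_lt_iff hA hB).trans
      (two_sqrt_mul_lt_two_div_iff hs1 hs2 hsfb1 hsfb2)⟩
end
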